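/- arXiv:1605.03677 — 4 statements merged into one kernel-verified Lean document; each statement's English description precedes it below -/
import Mathlib

section
/- In a potential outcomes model where Z is randomized (Z independent of all potential outcomes Y(z,d) and D(z)), the average controlled direct effect ACDE(d) = E[Y(1,d)] − E[Y(0,d)] satisfies the bounds pr(D=d, Y=1 | Z=1) + pr(D=d, Y=0 | Z=0) − 1 ≤ ACDE(d) ≤ 1 − pr(D=d, Y=0 | Z=1) − pr(D=d, Y=1 | Z=0). -/
/-!
Randomization makes `Z` independent of `Y(z,d)`, so conditioning on `Z = z` does not change the
law of `Y(z,d)`. On `{Z = z, D = d}` consistency gives `Y = Y(z,d)`, hence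
`pr(D = d, Y = b | Z = z) ≤ pr(Y(z,d) = b)` for both values of `b`. Taking `b = true` and
`b = false` bounds `E[Y(z,d)] = pr(Y(z,d) = true)` from both sides for `z = 0, 1`, and subtracting
gives the bounds on `ACDE(d)`.
-/

open MeasureTheory ProbabilityTheory

section

variable {Ω : Type*} [MeasurableSpace Ω] {μ : Measure Ω} {Z D Y W : Ω → Bool}

theorem ProbabilityTheory.IndepFun.cond_le_of_inter_subset {α β : Type*} [MeasurableSpace α]
    [MeasurableSpace β] [IsFiniteMeasure μ] {X : Ω → α} {W : Ω → β} {A : Set α} {B : Set β}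
    {t : Set Ω} (h : IndepFun X W μ) (hX : Measurable X) (hA : MeasurableSet A)
    (hB : MeasurableSet B) (hA0 : μ (X ⁻¹' A) ≠ 0) (ht : X ⁻¹' A ∩ t ⊆ W ⁻¹' B) :
    μ[t | X ⁻¹' A] ≤ μ (W ⁻¹' B) :=
  calc μ[t | X ⁻¹' A] = (μ (X ⁻¹' A))⁻¹ * μ (X ⁻¹' A ∩ t) := cond_apply (hX hA) μ t
    _ ≤ (μ (X ⁻¹' A))⁻¹ * μ (X ⁻¹' A ∩ W ⁻¹' B) := by
      gcongr _ * μ ?_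
      exact Set.subset_inter Set.inter_subset_left ht
    _ = μ (W ⁻¹' B) := by
      rw [h.measure_inter_preimage_eq_mul A B hA hB, ← mul_assoc,
        ENNReal.inv_mul_cancel hA0 (measure_ne_top _ _), one_mul]

theorem integral_ite_eq_true (f : Ω → Bool) (hf : Measurable f) :
    ∫ ω, (if f ω = true then (1 : ℝ) else 0) ∂μ = μ.real {ω | f ω = true} := by
  rw [← integral_indicator_one (s := {ω | f ω = true}) (hf (measurableSet_singleton true))]
  congr 1 with ω
  simp [Set.indicator_apply]

theorem cond_observed_le_potential [IsFiniteMeasure μ] (hZ : Measurable Z) (hind : IndepFun Z W μ)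
    {z d : Bool} (hz : μ {ω | Z ω = z} ≠ 0) (hcons : ∀ ω, Z ω = z → D ω = d → Y ω = W ω)
    (b : Bool) : μ[{ω | D ω = d ∧ Y ω = b} | {ω | Z ω = z}] ≤ μ {ω | W ω = b} :=
  hind.cond_le_of_inter_subset (A := {z}) (B := {b}) hZ (measurableSet_singleton z)
    (measurableSet_singleton b) hz fun ω ⟨hZω, hDω, hYω⟩ => (hcons ω hZω hDω).symm.trans hYω

theorem potential_outcome_bounds [IsProbabilityMeasure μ] (hZ : Measurable Z) (hW : Measurable W)
    (hind : IndepFun Z W μ) {z d : Bool} (hz : μ {ω | Z ω = z} ≠ 0)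
    (hcons : ∀ ω, Z ω = z → D ω = d → Y ω = W ω) :
    (μ[{ω | D ω = d ∧ Y ω = true} | {ω | Z ω = z}]).toReal ≤ μ.real {ω | W ω = true} ∧
      (μ[{ω | D ω = d ∧ Y ω = false} | {ω | Z ω = z}]).toReal
        ≤ 1 - μ.real {ω | W ω = true} := by
  have hWtrue : MeasurableSet {ω | W ω = true} := hW (measurableSet_singleton true)
  have hWfalse : {ω | W ω = false} = {ω | W ω = true}ᶜ := by ext; simp
  constructor
  · exact ENNReal.toReal_mono (measure_ne_top _ _)
      (cond_observed_le_potential hZ hind hz hcons true)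
  · rw [← probReal_compl_eq_one_sub hWtrue, ← hWfalse]
    exact ENNReal.toReal_mono (measure_ne_top _ _)
      (cond_observed_le_potential hZ hind hz hcons false)

end

theorem stmt_5_general {Ω : Type*} [MeasurableSpace Ω] (μ : Measure Ω) [IsProbabilityMeasure μ]
    (Z D Y : Ω → Bool) (Y' : Bool → Bool → Ω → Bool) (D' : Bool → Ω → Bool)
    (hZ : Measurable Z)
    (hY' : ∀ z d, Measurable (Y' z d))
    (hZ0 : μ {ω | Z ω = false} ≠ 0) (hZ1 : μ {ω | Z ω = true} ≠ 0)
    (hindep : IndepFun Z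
      (fun ω => ((fun z d => Y' z d ω, fun z => D' z ω) :
        (Bool → Bool → Bool) × (Bool → Bool))) μ)
    (hconsY : ∀ ω, Y ω = Y' (Z ω) (D ω) ω)
    (d : Bool) (ACDE : ℝ)
    (hACDE : ACDE = (∫ ω, (if Y' true d ω = true then (1 : ℝ) else 0) ∂μ)
      - ∫ ω, (if Y' false d ω = true then (1 : ℝ) else 0) ∂μ) :
    ((μ[|{ω | Z ω = true}]) {ω | D ω = d ∧ Y ω = true}).toReal
        + ((μ[|{ω | Z ω = false}]) {ω | D ω = d ∧ Y ω = false}).toReal - 1 ≤ ACDE ∧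
      ACDE ≤ 1 - ((μ[|{ω | Z ω = true}]) {ω | D ω = d ∧ Y ω = false}).toReal
        - ((μ[|{ω | Z ω = false}]) {ω | D ω = d ∧ Y ω = true}).toReal := by
  have hind (z : Bool) : IndepFun Z (Y' z d) μ :=
    hindep.comp measurable_id (by fun_prop : Measurable fun p : (Bool → Bool → Bool) × _ => p.1 z d)
  have hcons (z : Bool) (ω : Ω) (hZω : Z ω = z) (hDω : D ω = d) : Y ω = Y' z d ω := by
    rw [hconsY, hZω, hDω]
  obtain ⟨h1, h1'⟩ := potential_outcome_bounds hZ (hY' true d) (hind true) hZ1 (hcons true)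
  obtain ⟨h0, h0'⟩ := potential_outcome_bounds hZ (hY' false d) (hind false) hZ0 (hcons false)
  rw [integral_ite_eq_true _ (hY' true d), integral_ite_eq_true _ (hY' false d)] at hACDE
  constructor <;> linarith

/-- Balke–Pearl-type bounds on the average controlled direct effect
`ACDE(d) = E[Y(1,d)] - E[Y(0,d)]` when `Z` is randomized. -/
theorem stmt_5 {Ω : Type*} [MeasurableSpace Ω] (μ : Measure Ω) [IsProbabilityMeasure μ]
    (Z D Y : Ω → Bool) (Y' : Bool → Bool → Ω → Bool) (D' : Bool → Ω → Bool)
    (hZ : Measurable Z) (hD : Measurable D) (hY : Measurable Y)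
    (hY' : ∀ z d, Measurable (Y' z d)) (hD' : ∀ z, Measurable (D' z))
    (hZ0 : μ {ω | Z ω = false} ≠ 0) (hZ1 : μ {ω | Z ω = true} ≠ 0)
    (hindep : IndepFun Z
      (fun ω => ((fun z d => Y' z d ω, fun z => D' z ω) :
        (Bool → Bool → Bool) × (Bool → Bool))) μ)
    (hconsD : ∀ ω, D ω = D' (Z ω) ω)
    (hconsY : ∀ ω, Y ω = Y' (Z ω) (D ω) ω)
    (d : Bool) (ACDE : ℝ)
    (hACDE : ACDE = (∫ ω, (if Y' true d ω = true then (1 : ℝ) else 0) ∂μ)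
      - ∫ ω, (if Y' false d ω = true then (1 : ℝ) else 0) ∂μ) :
    ((μ[|{ω | Z ω = true}]) {ω | D ω = d ∧ Y ω = true}).toReal
        + ((μ[|{ω | Z ω = false}]) {ω | D ω = d ∧ Y ω = false}).toReal - 1 ≤ ACDE ∧
      ACDE ≤ 1 - ((μ[|{ω | Z ω = true}]) {ω | D ω = d ∧ Y ω = false}).toReal
        - ((μ[|{ω | Z ω = false}]) {ω | D ω = d ∧ Y ω = true}).toReal :=
  stmt_5_general μ Z D Y Y' D' hZ hY' hZ0 hZ1 hindep hconsY d ACDE hACDE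
end

section
/- Under the potential outcomes model with randomized Z and consistency, if pr(D=0, Y=1 | Z=1) + pr(D=0, Y=0 | Z=0) > 1, then ACDE(0) = E[Y(1,0)] − E[Y(0,0)] > 0; that is, violation of the instrumental inequality for (d,y) = (0,1) implies a strictly positive average controlled direct effect of Z on Y at treatment level 0. -/
/-!
Conditioning on `Z = z` turns the observed event `{D = 0, Y = y}` into the potential-outcome
event `{D(z) = 0, Y(z,0) = y}` (consistency), whose probability does not change under the
conditioning (randomization). Dropping the constraint on `D(z)` only enlarges these events, so
`pr(Y(1,0) = 1) + pr(Y(0,0) = 0) > 1`, i.e. `E[Y(1,0)] > 1 - pr(Y(0,0) = 0) = E[Y(0,0)]`.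
-/

open MeasureTheory ProbabilityTheory

namespace ProbabilityTheory

variable {Ω α β : Type*} [MeasurableSpace Ω] [MeasurableSpace α] [MeasurableSpace β]
  {μ : Measure Ω}

lemma IndepFun.cond_preimage_eq [IsFiniteMeasure μ] {Z : Ω → α} {X : Ω → β}
    (hindep : IndepFun Z X μ) (hZ : Measurable Z) {s : Set α} {t : Set β}
    (hs : MeasurableSet s) (ht : MeasurableSet t) (hZs : μ (Z ⁻¹' s) ≠ 0) :
    μ[X ⁻¹' t | Z ⁻¹' s] = μ (X ⁻¹' t) := by
  rw [cond_apply (hZ hs), hindep.measure_inter_preimage_eq_mul s t hs ht, ← mul_assoc,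
    ENNReal.inv_mul_cancel hZs (measure_ne_top μ _), one_mul]

lemma integral_ite_eq_true_one_zero {f : Ω → Bool} (hf : Measurable f) :
    ∫ ω, (if f ω = true then (1 : ℝ) else 0) ∂μ = μ.real {ω | f ω = true} := by
  have hm : MeasurableSet {ω | f ω = true} := hf (measurableSet_singleton true)
  rw [← integral_indicator_one hm]
  congr 1 with ω
  simp [Set.indicator_apply]

lemma cond_observed_eq_potential [IsFiniteMeasure μ] {Z D Y : Ω → Bool}
    {Y' : Bool → Bool → Ω → Bool} {D' : Bool → Ω → Bool} (hZ : Measurable Z)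
    (hindep : IndepFun Z
      (fun ω => ((fun z d => Y' z d ω, fun z => D' z ω) :
        (Bool → Bool → Bool) × (Bool → Bool))) μ)
    (hconsD : ∀ ω, D ω = D' (Z ω) ω) (hconsY : ∀ ω, Y ω = Y' (Z ω) (D ω) ω)
    {z : Bool} (hz : μ {ω | Z ω = z} ≠ 0) (d y : Bool) :
    μ[{ω | D ω = d ∧ Y ω = y} | {ω | Z ω = z}] = μ {ω | D' z ω = d ∧ Y' z d ω = y} := by
  have hZz : MeasurableSet {ω | Z ω = z} := hZ (measurableSet_singleton z)
  have consistency : {ω | Z ω = z} ∩ {ω | D ω = d ∧ Y ω = y}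
      = {ω | Z ω = z} ∩ {ω | D' z ω = d ∧ Y' z d ω = y} := by
    ext ω
    simp only [Set.mem_inter_iff, Set.mem_ofPred_eq, and_congr_right_iff]
    rintro rfl
    rw [hconsY, hconsD]
    constructor <;> rintro ⟨rfl, rfl⟩ <;> exact ⟨rfl, rfl⟩
  rw [← cond_inter_self hZz, consistency, cond_inter_self hZz]
  exact hindep.cond_preimage_eq hZ (measurableSet_singleton z)
    (t := {p | p.2 z = d ∧ p.1 z d = y}) (Set.toFinite _).measurableSet hz

end ProbabilityTheory

theorem stmt_6_general {Ω : Type*} [MeasurableSpace Ω] (μ : Measure Ω) [IsProbabilityMeasure μ]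
    (Z D Y : Ω → Bool) (Y' : Bool → Bool → Ω → Bool) (D' : Bool → Ω → Bool)
    (hZ : Measurable Z)
    (hY' : ∀ z d, Measurable (Y' z d))
    (hZ0 : μ {ω | Z ω = false} ≠ 0) (hZ1 : μ {ω | Z ω = true} ≠ 0)
    (hindep : IndepFun Z
      (fun ω => ((fun z d => Y' z d ω, fun z => D' z ω) :
        (Bool → Bool → Bool) × (Bool → Bool))) μ)
    (hconsD : ∀ ω, D ω = D' (Z ω) ω)
    (hconsY : ∀ ω, Y ω = Y' (Z ω) (D ω) ω)
    (hviol : ((μ[|{ω | Z ω = true}]) {ω | D ω = false ∧ Y ω = true}).toReal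
      + ((μ[|{ω | Z ω = false}]) {ω | D ω = false ∧ Y ω = false}).toReal > 1) :
    (∫ ω, (if Y' true false ω = true then (1 : ℝ) else 0) ∂μ)
      - (∫ ω, (if Y' false false ω = true then (1 : ℝ) else 0) ∂μ) > 0 := by
  rw [cond_observed_eq_potential hZ hindep hconsD hconsY hZ1,
    cond_observed_eq_potential hZ hindep hconsD hconsY hZ0, ← measureReal_def,
    ← measureReal_def] at hviol
  rw [integral_ite_eq_true_one_zero (hY' true false),
    integral_ite_eq_true_one_zero (hY' false false)]
  have hY10_ge : μ.real {ω | D' true ω = false ∧ Y' true false ω = true}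
      ≤ μ.real {ω | Y' true false ω = true} := measureReal_mono fun _ h ↦ h.2
  have hY00_ge : μ.real {ω | D' false ω = false ∧ Y' false false ω = false}
      ≤ μ.real {ω | Y' false false ω = false} := measureReal_mono fun _ h ↦ h.2
  have hcompl : μ.real {ω | Y' false false ω = false}
      = 1 - μ.real {ω | Y' false false ω = true} := by
    have hm : MeasurableSet {ω | Y' false false ω = true} :=
      hY' false false (measurableSet_singleton true)
    rw [← probReal_compl_eq_one_sub hm]
    congr 1 with ω
    simp
  linarith

/-- Violation of the instrumental inequality for `(d,y) = (0,1)` implies a strictly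
positive average controlled direct effect `ACDE(0) > 0`. -/
theorem stmt_6 {Ω : Type*} [MeasurableSpace Ω] (μ : Measure Ω) [IsProbabilityMeasure μ]
    (Z D Y : Ω → Bool) (Y' : Bool → Bool → Ω → Bool) (D' : Bool → Ω → Bool)
    (hZ : Measurable Z) (hD : Measurable D) (hY : Measurable Y)
    (hY' : ∀ z d, Measurable (Y' z d)) (hD' : ∀ z, Measurable (D' z))
    (hZ0 : μ {ω | Z ω = false} ≠ 0) (hZ1 : μ {ω | Z ω = true} ≠ 0)
    (hindep : IndepFun Z
      (fun ω => ((fun z d => Y' z d ω, fun z => D' z ω) :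
        (Bool → Bool → Bool) × (Bool → Bool))) μ)
    (hconsD : ∀ ω, D ω = D' (Z ω) ω)
    (hconsY : ∀ ω, Y ω = Y' (Z ω) (D ω) ω)
    (hviol : ((μ[|{ω | Z ω = true}]) {ω | D ω = false ∧ Y ω = true}).toReal
      + ((μ[|{ω | Z ω = false}]) {ω | D ω = false ∧ Y ω = false}).toReal > 1) :
    (∫ ω, (if Y' true false ω = true then (1 : ℝ) else 0) ∂μ)
      - (∫ ω, (if Y' false false ω = true then (1 : ℝ) else 0) ∂μ) > 0 :=
  stmt_6_general μ Z D Y Y' D' hZ hY' hZ0 hZ1 hindep hconsD hconsY hviol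
end

section
/- Under the full instrumental variable model (Z independent of potential outcomes, exclusion restriction Y(z,d) = Y(d) for all z, and consistency), the four Balke–Pearl inequalities pr(D=d, Y=y | Z=1) + pr(D=d, Y=1−y | Z=0) ≤ 1 hold for all d, y ∈ {0,1}. -/
open MeasureTheory ProbabilityTheory

/-- Under the full IV model (randomization, exclusion restriction, consistency) the four
Balke–Pearl inequalities hold. -/
theorem stmt_7 {Ω : Type*} [MeasurableSpace Ω] (μ : Measure Ω) [IsProbabilityMeasure μ]
    (Z D Y : Ω → Bool) (D' : Bool → Ω → Bool) (Y' : Bool → Ω → Bool)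
    (hZ : Measurable Z) (hD : Measurable D) (hY : Measurable Y)
    (hD' : ∀ z, Measurable (D' z)) (hY' : ∀ d, Measurable (Y' d))
    (hZ0 : μ {ω | Z ω = false} ≠ 0) (hZ1 : μ {ω | Z ω = true} ≠ 0)
    (hindep : IndepFun Z
      (fun ω => ((D' false ω, D' true ω, Y' false ω, Y' true ω) :
        Bool × Bool × Bool × Bool)) μ)
    (hconsD : ∀ ω, D ω = D' (Z ω) ω)
    (hconsY : ∀ ω, Y ω = Y' (D ω) ω) :
    ∀ d y : Bool,
      ((μ[|{ω | Z ω = true}]) {ω | D ω = d ∧ Y ω = y}).toReal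
        + ((μ[|{ω | Z ω = false}]) {ω | D ω = d ∧ Y ω = !y}).toReal ≤ 1 := by
  set W : Ω → Bool × Bool × Bool × Bool :=
    fun ω => (D' false ω, D' true ω, Y' false ω, Y' true ω) with hW
  -- key lemma: conditional probability equals unconditional probability of counterfactual event
  have key : ∀ z d y : Bool, μ {ω | Z ω = z} ≠ 0 →
      (μ[|{ω | Z ω = z}]) {ω | D ω = d ∧ Y ω = y}
        = μ {ω | D' z ω = d ∧ Y' d ω = y} := by
    intro z d y hz
    have hZm : MeasurableSet {ω | Z ω = z} := hZ (MeasurableSet.singleton z)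
    rw [cond_apply hZm]
    have hinter : {ω | Z ω = z} ∩ {ω | D ω = d ∧ Y ω = y}
        = {ω | Z ω = z} ∩ {ω | D' z ω = d ∧ Y' d ω = y} := by
      ext ω
      simp only [Set.mem_inter_iff, Set.mem_setOf_eq]
      constructor
      · rintro ⟨hzω, hdω, hyω⟩
        have h1 : D' z ω = d := by rw [← hzω, ← hconsD ω]; exact hdω
        have h2 : Y' d ω = y := by rw [← hdω, ← hconsY ω]; exact hyω
        exact ⟨hzω, h1, h2⟩
      · rintro ⟨hzω, hdω, hyω⟩
        have h1 : D ω = d := by rw [hconsD ω, hzω]; exact hdω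
        have h2 : Y ω = y := by rw [hconsY ω, h1]; exact hyω
        exact ⟨hzω, h1, h2⟩
    rw [hinter]
    -- express the counterfactual event as a preimage under W
    set T : Set (Bool × Bool × Bool × Bool) :=
      {p | (bif z then p.2.1 else p.1) = d ∧ (bif d then p.2.2.2 else p.2.2.1) = y} with hT
    have hpre : {ω | D' z ω = d ∧ Y' d ω = y} = W ⁻¹' T := by
      ext ω
      simp only [Set.mem_preimage, hT, Set.mem_setOf_eq, hW]
      cases z <;> cases d <;> simp
    have hTm : MeasurableSet T := T.to_countable.measurableSet
    have hZset : {ω | Z ω = z} = Z ⁻¹' {z} := rfl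
    rw [hpre, hZset,
      hindep.measure_inter_preimage_eq_mul {z} T (MeasurableSet.singleton z) hTm]
    rw [← mul_assoc, ENNReal.inv_mul_cancel (by rwa [← hZset]) (measure_ne_top μ _), one_mul]
  intro d y
  rw [key true d y hZ1, key false d (!y) hZ0]
  have hdisj : Disjoint {ω | D' true ω = d ∧ Y' d ω = y} {ω | D' false ω = d ∧ Y' d ω = !y} := by
    rw [Set.disjoint_left]
    rintro ω ⟨_, h1⟩ ⟨_, h2⟩
    rw [h1] at h2
    cases y <;> simp at h2
  have hm : MeasurableSet {ω | D' false ω = d ∧ Y' d ω = !y} :=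
    ((hD' false) (MeasurableSet.singleton d)).inter ((hY' d) (MeasurableSet.singleton (!y)))
  have hsum : μ {ω | D' true ω = d ∧ Y' d ω = y} + μ {ω | D' false ω = d ∧ Y' d ω = !y} ≤ 1 := by
    rw [← measure_union hdisj hm]
    exact prob_le_one
  rw [← ENNReal.toReal_add (measure_ne_top μ _) (measure_ne_top μ _)]
  calc (μ {ω | D' true ω = d ∧ Y' d ω = y} + μ {ω | D' false ω = d ∧ Y' d ω = !y}).toReal
      ≤ (1 : ENNReal).toReal := ENNReal.toReal_mono ENNReal.one_ne_top hsum
    _ = 1 := ENNReal.toReal_one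
end

section
/- Under the conditional IV model (Z independent of potential outcomes given V, exclusion restriction, consistency), for every value v of the covariate V with pr(V=v) > 0, and all d, y ∈ {0,1}: pr(D=d, Y=y | Z=1, V=v) + pr(D=d, Y=1−y | Z=0, V=v) ≤ 1. -/
open MeasureTheory ProbabilityTheory

/-- Conditional IV model: the Balke–Pearl inequalities hold within every level `v`
of the covariate `V` with positive probability. -/
theorem stmt_15 {Ω : Type*} [MeasurableSpace Ω] (μ : Measure Ω) [IsProbabilityMeasure μ]
    {𝒱 : Type*} [Fintype 𝒱] [DecidableEq 𝒱] [MeasurableSpace 𝒱] [MeasurableSingletonClass 𝒱]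
    (V : Ω → 𝒱) (Z D Y : Ω → Bool) (D' : Bool → Ω → Bool) (Y' : Bool → Ω → Bool)
    (hV : Measurable V) (hZ : Measurable Z) (hD : Measurable D) (hY : Measurable Y)
    (hD' : ∀ z, Measurable (D' z)) (hY' : ∀ d, Measurable (Y' d))
    (hpos : ∀ (z : Bool) (v : 𝒱), μ {ω | V ω = v} ≠ 0 → μ {ω | Z ω = z ∧ V ω = v} ≠ 0)
    (hcondindep : ∀ v : 𝒱, μ {ω | V ω = v} ≠ 0 →
      IndepFun Z
        (fun ω => ((D' false ω, D' true ω, Y' false ω, Y' true ω) :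
          Bool × Bool × Bool × Bool)) (μ[|{ω | V ω = v}]))
    (hconsD : ∀ ω, D ω = D' (Z ω) ω)
    (hconsY : ∀ ω, Y ω = Y' (D ω) ω) :
    ∀ v : 𝒱, μ {ω | V ω = v} ≠ 0 → ∀ d y : Bool,
      ((μ[|{ω | Z ω = true ∧ V ω = v}]) {ω | D ω = d ∧ Y ω = y}).toReal
        + ((μ[|{ω | Z ω = false ∧ V ω = v}]) {ω | D ω = d ∧ Y ω = !y}).toReal ≤ 1 := by
  intro v hv d y
  set A : Set Ω := {ω | V ω = v} with hA
  have hAmeas : MeasurableSet A := hV (measurableSet_singleton v)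
  set ν : Measure Ω := μ[|A] with hν
  have hνprob : IsProbabilityMeasure ν := cond_isProbabilityMeasure hv
  set W : Ω → Bool × Bool × Bool × Bool :=
    fun ω => (D' false ω, D' true ω, Y' false ω, Y' true ω) with hW
  have hWmeas : Measurable W :=
    ((hD' false).prodMk (((hD' true)).prodMk (((hY' false)).prodMk (hY' true))))
  -- selection of the relevant outcome coordinate
  have hindep := hcondindep v hv
  -- key: conditional probability of an event determined by W given Z=z,V=v equals ν of it
  have key : ∀ (z : Bool) (S : Set (Bool × Bool × Bool × Bool)) (T : Set Ω),
      {ω | Z ω = z ∧ V ω = v} ∩ T = {ω | Z ω = z ∧ V ω = v} ∩ (W ⁻¹' S) →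
      (μ[|{ω | Z ω = z ∧ V ω = v}]) T = ν (W ⁻¹' S) := by
    intro z S T hT
    set B : Set Ω := {ω | Z ω = z ∧ V ω = v} with hB
    have hBmeas : MeasurableSet B := by
      have : B = Z ⁻¹' {z} ∩ A := by ext ω; exact Iff.rfl
      rw [this]; exact (hZ (measurableSet_singleton z)).inter hAmeas
    have hB0 : μ B ≠ 0 := hpos z v hv
    have hAinter : ∀ X : Set Ω, μ (A ∩ X) = μ A * ν X := by
      intro X
      rw [hν, cond_apply hAmeas, ← mul_assoc, ENNReal.mul_inv_cancel hv (measure_ne_top μ A),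
        one_mul]
    have hBeq : B = A ∩ (Z ⁻¹' {z}) := by ext ω; exact and_comm
    have hSmeas : MeasurableSet S := (Set.to_countable S).measurableSet
    have hindep' : ν (Z ⁻¹' {z} ∩ W ⁻¹' S) = ν (Z ⁻¹' {z}) * ν (W ⁻¹' S) :=
      hindep.measure_inter_preimage_eq_mul {z} S (measurableSet_singleton z) hSmeas
    have hmain : μ (B ∩ T) = μ B * ν (W ⁻¹' S) := by
      rw [hT]
      have h1 : B ∩ W ⁻¹' S = A ∩ (Z ⁻¹' {z} ∩ W ⁻¹' S) := by
        rw [hBeq, Set.inter_assoc]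
      rw [h1, hAinter, hindep', hBeq, hAinter, mul_assoc]
    rw [cond_apply hBmeas, hmain, ← mul_assoc,
      ENNReal.inv_mul_cancel hB0 (measure_ne_top μ B), one_mul]
  -- the two potential-outcome events
  set S1 : Set (Bool × Bool × Bool × Bool) :=
    {p | p.2.1 = d ∧ (bif d then p.2.2.2 else p.2.2.1) = y} with hS1
  set S0 : Set (Bool × Bool × Bool × Bool) :=
    {p | p.1 = d ∧ (bif d then p.2.2.2 else p.2.2.1) = !y} with hS0
  have e1 : (μ[|{ω | Z ω = true ∧ V ω = v}]) {ω | D ω = d ∧ Y ω = y} = ν (W ⁻¹' S1) := by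
    apply key
    ext ω
    simp only [Set.mem_inter_iff, Set.mem_setOf_eq, Set.mem_preimage, hS1, hW]
    constructor
    · rintro ⟨⟨hz, hvv⟩, hd, hy⟩
      refine ⟨⟨hz, hvv⟩, ?_, ?_⟩
      · rw [← hd, hconsD ω, hz]
      · rw [hconsD ω, hz] at hd
        rw [hconsY ω, hconsD ω, hz, hd] at hy
        cases d <;> simpa using hy
    · rintro ⟨⟨hz, hvv⟩, hd, hy⟩
      have hDd : D ω = d := by rw [hconsD ω, hz]; exact hd
      refine ⟨⟨hz, hvv⟩, hDd, ?_⟩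
      rw [hconsY ω, hDd]
      cases d <;> simpa using hy
  have e0 : (μ[|{ω | Z ω = false ∧ V ω = v}]) {ω | D ω = d ∧ Y ω = !y} = ν (W ⁻¹' S0) := by
    apply key
    ext ω
    simp only [Set.mem_inter_iff, Set.mem_setOf_eq, Set.mem_preimage, hS0, hW]
    constructor
    · rintro ⟨⟨hz, hvv⟩, hd, hy⟩
      refine ⟨⟨hz, hvv⟩, ?_, ?_⟩
      · rw [← hd, hconsD ω, hz]
      · rw [hconsD ω, hz] at hd
        rw [hconsY ω, hconsD ω, hz, hd] at hy
        cases d <;> simpa using hy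
    · rintro ⟨⟨hz, hvv⟩, hd, hy⟩
      have hDd : D ω = d := by rw [hconsD ω, hz]; exact hd
      refine ⟨⟨hz, hvv⟩, hDd, ?_⟩
      rw [hconsY ω, hDd]
      cases d <;> simpa using hy
  rw [e1, e0]
  have hdisj : Disjoint (W ⁻¹' S1) (W ⁻¹' S0) := by
    rw [Set.disjoint_left]
    intro ω h1 h0
    simp only [Set.mem_preimage, hS1, hS0, Set.mem_setOf_eq, hW] at h1 h0
    have := h1.2.symm.trans h0.2
    cases y <;> simp at this
  have hsum : ν (W ⁻¹' S1) + ν (W ⁻¹' S0) ≤ 1 := by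
    rw [← measure_union hdisj ((Set.to_countable S0).measurableSet.preimage hWmeas)]
    exact prob_le_one
  have h1ne : ν (W ⁻¹' S1) ≠ ⊤ := measure_ne_top _ _
  have h0ne : ν (W ⁻¹' S0) ≠ ⊤ := measure_ne_top _ _
  rw [← ENNReal.toReal_add h1ne h0ne]
  exact ENNReal.toReal_le_of_le_ofReal zero_le_one (by simpa using hsum)
end
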